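/- arXiv:1306.0957 — 2 statements merged into one kernel-verified Lean document; each statement's English description precedes it below -/
import Mathlib

section
/- Suppose θ = id and let f ∈ F_q[X] be monic of degree n with f(0) ≠ 0 and companion matrix A_c. Let f⃗ = (f_0, ..., f_{n-1}) be the vector of coefficients of f (so the last row of A_c is f⃗), and let k be the minimal nonnegative integer h such that f⃗·A_c^h = e_1, the first standard basis vector. Then the order m of A_c (equivalently, the minimal m with f dividing X^m − 1) satisfies m = n + k. -/
open Polynomial Matrix

/-- The companion matrix of a monic polynomial `f = Xⁿ − f_{n-1}X^{n-1} − ... − f_0`: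
it has `1`'s on the superdiagonal and last row `(f_0, ..., f_{n-1})`, where
`f_j = -(f.coeff j)`. -/
def companionMatrix {F : Type*} [Field F] (n : ℕ) (f : Polynomial F) :
    Matrix (Fin n) (Fin n) F :=
  fun i j => if (i : ℕ) + 1 = n then -(f.coeff j)
    else if (i : ℕ) + 1 = (j : ℕ) then 1 else 0

/-!
Writing `A = A_c` and `f⃗` for its last row, `e₁ A^h = e_{h+1}` for `h < n` and `e₁ A^n = f⃗`.
Since every `e_i` lies in the orbit of `e₁`, a power `A^m` is the identity as soon as it fixes
`e₁`. For `0 < m < n` it does not (`e₁ A^m = e_{m+1}`), and for `m = n + h` we have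
`e₁ A^m = f⃗ A^h`, so the least such `m` is `n + k`.
-/

theorem Matrix.pow_eq_one_iff_vecMul_pow_eq_self {ι R : Type*} [Fintype ι] [DecidableEq ι]
    [Semiring R] {A : Matrix ι ι R} {v : ι → R}
    (horbit : ∀ i, ∃ j : ℕ, v ᵥ* A ^ j = Pi.single i 1) (m : ℕ) :
    A ^ m = 1 ↔ v ᵥ* A ^ m = v := by
  refine ⟨fun h => by rw [h, vecMul_one], fun hfix => ?_⟩
  ext i l
  obtain ⟨j, hj⟩ := horbit i
  have hrow : Pi.single i 1 ᵥ* A ^ m = Pi.single i 1 := by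
    rw [← hj, vecMul_vecMul, ← pow_add, add_comm, pow_add, ← vecMul_vecMul, hfix]
  simpa [single_one_vecMul, one_apply, Pi.single_apply, eq_comm] using congrFun hrow l

section companionMatrix

variable {F : Type*} [Field F] {n : ℕ} (f : F[X])

theorem single_vecMul_companionMatrix {i : ℕ} (hi : i + 1 < n) :
    Pi.single ⟨i, by omega⟩ 1 ᵥ* companionMatrix n f = Pi.single ⟨i + 1, hi⟩ 1 := by
  ext j
  rw [single_one_vecMul, row, companionMatrix, if_neg hi.ne]
  simp only [Pi.single_apply, Fin.ext_iff, eq_comm]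

theorem single_last_vecMul_companionMatrix (hn : 0 < n) :
    Pi.single ⟨n - 1, by omega⟩ 1 ᵥ* companionMatrix n f = fun j : Fin n => -f.coeff j := by
  ext j
  simp only [single_one_vecMul, row, companionMatrix, Nat.sub_add_cancel hn, if_true]

theorem single_zero_vecMul_companionMatrix_pow {h : ℕ} (hh : h < n) :
    Pi.single ⟨0, by omega⟩ 1 ᵥ* companionMatrix n f ^ h = Pi.single ⟨h, hh⟩ 1 := by
  induction h with
  | zero => simp
  | succ h ih =>
    rw [pow_succ, ← vecMul_vecMul, ih (by omega), single_vecMul_companionMatrix f hh]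

theorem single_zero_vecMul_companionMatrix_pow_self (hn : 0 < n) :
    Pi.single ⟨0, hn⟩ 1 ᵥ* companionMatrix n f ^ n = fun j : Fin n => -f.coeff j := by
  calc Pi.single ⟨0, hn⟩ 1 ᵥ* companionMatrix n f ^ n
      = Pi.single ⟨0, hn⟩ 1 ᵥ* companionMatrix n f ^ (n - 1) ᵥ* companionMatrix n f := by
        rw [vecMul_vecMul, ← pow_succ, Nat.sub_add_cancel hn]
    _ = fun j : Fin n => -f.coeff j := by
        rw [single_zero_vecMul_companionMatrix_pow f (by omega : n - 1 < n),
          single_last_vecMul_companionMatrix f hn]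

theorem single_zero_vecMul_companionMatrix_pow_add (hn : 0 < n) (h : ℕ) :
    Pi.single ⟨0, hn⟩ 1 ᵥ* companionMatrix n f ^ (n + h) =
      (fun j : Fin n => -f.coeff j) ᵥ* companionMatrix n f ^ h := by
  rw [pow_add, ← vecMul_vecMul, single_zero_vecMul_companionMatrix_pow_self f hn]

end companionMatrix

theorem orderOf_companion_eq_add_general {F : Type*} [Field F]
    (n : ℕ) (hn : 0 < n) (f : Polynomial F) (k : ℕ)
    (hk : IsLeast {h : ℕ |
        Matrix.vecMul (fun j : Fin n => -(f.coeff j)) ((companionMatrix n f) ^ h) =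
          Pi.single (⟨0, hn⟩ : Fin n) 1} k) :
    orderOf (companionMatrix n f) = n + k := by
  have hone := Matrix.pow_eq_one_iff_vecMul_pow_eq_self (A := companionMatrix n f)
    (v := Pi.single ⟨0, hn⟩ 1)
    (fun i => ⟨i, single_zero_vecMul_companionMatrix_pow f i.isLt⟩)
  rw [orderOf_eq_iff (by omega), hone, single_zero_vecMul_companionMatrix_pow_add f hn]
  refine ⟨hk.1, fun m hm hm0 => ?_⟩
  rw [Ne, hone]
  rcases lt_or_ge m n with hmn | hmn
  · rw [single_zero_vecMul_companionMatrix_pow f hmn]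
    intro h
    simpa [Pi.single_apply, hm0.ne'] using congrFun h ⟨m, hmn⟩
  · obtain ⟨h, rfl⟩ := Nat.exists_eq_add_of_le hmn
    rw [single_zero_vecMul_companionMatrix_pow_add f hn]
    exact fun hfix => absurd (hk.2 hfix) (by omega)

/-- For `θ = id`, `f` monic of degree `n` with `f(0) ≠ 0`, `f⃗` the vector
`(f_0,...,f_{n-1})` of coefficients (the last row of the companion matrix `A_c`), and
`k` the minimal nonnegative integer `h` with `f⃗·A_c^h = e₁`, the order `m` of `A_c`
satisfies `m = n + k`. -/
theorem orderOf_companion_eq_add {F : Type*} [Field F] [Fintype F]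
    (n : ℕ) (hn : 0 < n) (f : Polynomial F) (hmonic : f.Monic)
    (hdeg : f.natDegree = n) (hf0 : f.coeff 0 ≠ 0) (k : ℕ)
    (hk : IsLeast {h : ℕ |
        Matrix.vecMul (fun j : Fin n => -(f.coeff j)) ((companionMatrix n f) ^ h) =
          Pi.single (⟨0, hn⟩ : Fin n) 1} k) :
    orderOf (companionMatrix n f) = n + k :=
  orderOf_companion_eq_add_general n hn f k hk
end

section
/- Let R = F_q[X;θ] be the skew polynomial ring and let f ∈ R with f·q_f = X^m − 1 for some q_f ∈ R, where f, q_f are monic. Define the ring automorphism Θ of R by (Σ a_i X^i)Θ := Σ θ(a_i) X^i. Then f = (f)Θ^m, i.e., all coefficients of f are fixed by θ^m. Consequently, writing f = (−1)^n(X^n − Σ f_i X^i), if the coefficient vector (f_0,...,f_{n-1}) is not fixed by θ^t for any 0 < t < s (s the order of θ), then s divides m. -/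
open Polynomial

/-! Write `⋆` for the skew product and `ρ = q ⋆ f - (X^m - 1)`. Since `X^m ⋆ g = X^m Θ^m(g)`,
associativity gives `f ⋆ ρ = (f ⋆ q) ⋆ f - f ⋆ (X^m - 1) = X^m (Θ^m(f) - f)`, which vanishes
below degree `m`. But `ρ` has degree `< m` (both `q ⋆ f` and `X^m - 1` are monic of degree `m`)
and `f` has nonzero constant term, so comparing coefficients from the bottom up forces `ρ = 0`,
hence `Θ^m(f) = f`. Then `θ^(m % s) = θ^m` fixes the coefficients of `f`, so `m % s = 0`. -/

/-- The `k`-th coefficient of the skew product `f * g` in the skew polynomial ring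
`F[X;θ]`, where multiplication satisfies `X · a = θ(a) · X`, so that
`(f*g)_k = ∑_{i+j=k} f_i θ^i(g_j)`. -/
noncomputable def skewMulCoeff {F : Type*} [Field F] (θ : RingAut F)
    (f g : Polynomial F) (k : ℕ) : F :=
  ∑ i ∈ Finset.range (k + 1), f.coeff i * (θ ^ i) (g.coeff (k - i))

open Finset

namespace Polynomial

variable {F : Type*} [Field F] (θ : RingAut F)

noncomputable def skewMul (f g : F[X]) : F[X] :=
  ∑ k ∈ range (f.natDegree + g.natDegree + 1), monomial k (skewMulCoeff θ f g k)

lemma skewMulCoeff_eq_zero_of_natDegree_add_lt {f g : F[X]} {k : ℕ}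
    (hk : f.natDegree + g.natDegree < k) : skewMulCoeff θ f g k = 0 := by
  refine sum_eq_zero fun i hi => ?_
  rw [mem_range] at hi
  rcases le_or_gt i f.natDegree with h | h
  · rw [coeff_eq_zero_of_natDegree_lt (p := g) (by omega), map_zero, mul_zero]
  · rw [coeff_eq_zero_of_natDegree_lt h, zero_mul]

lemma skewMulCoeff_natDegree_add (f g : F[X]) :
    skewMulCoeff θ f g (f.natDegree + g.natDegree) =
      f.leadingCoeff * (θ ^ f.natDegree) g.leadingCoeff := by
  rw [skewMulCoeff, sum_eq_single f.natDegree, Nat.add_sub_cancel_left]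
  · rfl
  · intro i hi hne
    rw [mem_range] at hi
    rcases lt_or_gt_of_ne hne with h | h
    · rw [coeff_eq_zero_of_natDegree_lt (p := g) (by omega), map_zero, mul_zero]
    · rw [coeff_eq_zero_of_natDegree_lt h, zero_mul]
  · simp

@[simp]
lemma coeff_skewMul (f g : F[X]) (k : ℕ) :
    (skewMul θ f g).coeff k = skewMulCoeff θ f g k := by
  rw [skewMul, finsetSum_coeff]
  simp only [coeff_monomial, sum_ite_eq', mem_range]
  split_ifs with h
  · rfl
  · exact (skewMulCoeff_eq_zero_of_natDegree_add_lt θ (by omega)).symm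

lemma coeff_skewMul_zero (f g : F[X]) :
    (skewMul θ f g).coeff 0 = f.coeff 0 * g.coeff 0 := by
  simp [skewMulCoeff]

lemma skewMul_assoc (f g h : F[X]) :
    skewMul θ (skewMul θ f g) h = skewMul θ f (skewMul θ g h) := by
  ext k
  simp only [coeff_skewMul, skewMulCoeff, sum_mul, map_sum, mul_sum]
  have reindex : ∀ i ∈ range (k + 1),
      ∑ j ∈ range (k - i + 1), f.coeff i * (θ ^ i) (g.coeff j * (θ ^ j) (h.coeff (k - i - j))) =
      ∑ p ∈ Ico i (k + 1), f.coeff i * (θ ^ i) (g.coeff (p - i)) * (θ ^ p) (h.coeff (k - p)) := by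
    intro i hi
    rw [mem_range] at hi
    rw [sum_Ico_eq_sum_range, show k + 1 - i = k - i + 1 by omega]
    refine sum_congr rfl fun j _ => ?_
    rw [map_mul, ← mul_assoc, Nat.add_sub_cancel_left, Nat.sub_sub, pow_add]
    rfl
  rw [sum_congr rfl reindex]
  exact sum_comm' fun p i => by simp only [mem_range, mem_Ico]; omega

lemma skewMul_sub (f g h : F[X]) :
    skewMul θ f (g - h) = skewMul θ f g - skewMul θ f h := by
  ext k
  simp only [coeff_sub, coeff_skewMul, skewMulCoeff, map_sub, mul_sub, sum_sub_distrib]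

lemma sub_skewMul (f g h : F[X]) :
    skewMul θ (f - g) h = skewMul θ f h - skewMul θ g h := by
  ext k
  simp only [coeff_sub, coeff_skewMul, skewMulCoeff, sub_mul, sum_sub_distrib]

lemma skewMul_X_pow (f : F[X]) (n : ℕ) : skewMul θ f (X ^ n) = f * X ^ n := by
  ext k
  rw [coeff_skewMul, coeff_mul_X_pow', skewMulCoeff]
  simp only [coeff_X_pow, apply_ite, map_one, map_zero, mul_one, mul_zero]
  split_ifs with hn
  · rw [sum_eq_single (k - n)]
    · rw [if_pos (by omega)]
    · intro i hi hne
      rw [mem_range] at hi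
      rw [if_neg (by omega)]
    · simp
  · exact sum_eq_zero fun i hi => if_neg (by omega)

lemma X_pow_skewMul (n : ℕ) (g : F[X]) :
    skewMul θ (X ^ n) g = X ^ n * g.map (θ ^ n : RingAut F) := by
  ext k
  simp [coeff_X_pow_mul', skewMulCoeff, coeff_X_pow]

lemma skewMul_one (f : F[X]) : skewMul θ f 1 = f := by
  simpa using skewMul_X_pow θ f 0

lemma one_skewMul (g : F[X]) : skewMul θ 1 g = g := by
  ext k
  simp [skewMulCoeff, coeff_one]

lemma skewMul_zero (f : F[X]) : skewMul θ f 0 = 0 := by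
  simpa using skewMul_sub θ f 0 0

lemma eq_zero_of_degree_lt_of_coeff_skewMul_eq_zero {f g : F[X]} (hf : f.coeff 0 ≠ 0) {n : ℕ}
    (hg : g.degree < n) (h : ∀ k < n, (skewMul θ f g).coeff k = 0) : g = 0 := by
  ext k
  rw [coeff_zero]
  rcases le_or_gt n k with hk | hk
  · exact coeff_eq_zero_of_degree_lt (hg.trans_le (by exact_mod_cast hk))
  induction k using Nat.strong_induction_on with
  | _ k ih =>
    have hk0 := h k hk
    rw [coeff_skewMul, skewMulCoeff, sum_range_succ', sum_eq_zero, zero_add] at hk0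
    · simpa [hf] using hk0
    · intro i hi
      rw [mem_range] at hi
      rw [ih (k - (i + 1)) (by omega) (by omega), map_zero, mul_zero]

variable {θ} in
lemma natDegree_skewMul {f g : F[X]} (hf : f ≠ 0) (hg : g ≠ 0) :
    (skewMul θ f g).natDegree = f.natDegree + g.natDegree := by
  refine natDegree_eq_of_le_of_coeff_ne_zero ?_ ?_
  · exact natDegree_le_iff_coeff_eq_zero.2 fun k hk => by
      rw [coeff_skewMul]
      exact skewMulCoeff_eq_zero_of_natDegree_add_lt θ (by exact_mod_cast hk)
  · rw [coeff_skewMul, skewMulCoeff_natDegree_add]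
    exact mul_ne_zero (leadingCoeff_ne_zero.2 hf)
      (EmbeddingLike.map_ne_zero_iff.2 (leadingCoeff_ne_zero.2 hg))

variable {θ} in
lemma Monic.skewMul {f g : F[X]} (hf : f.Monic) (hg : g.Monic) : (skewMul θ f g).Monic := by
  have hlc := coeff_skewMul θ f g (f.natDegree + g.natDegree)
  rwa [skewMulCoeff_natDegree_add, hf.leadingCoeff, hg.leadingCoeff, map_one, one_mul,
    ← natDegree_skewMul hf.ne_zero hg.ne_zero] at hlc

theorem map_pow_eq_self_of_skewMul_eq_X_pow_sub_one {f q : F[X]} (hf : f.Monic) (hq : q.Monic)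
    {m : ℕ} (h : skewMul θ f q = X ^ m - 1) : f.map (θ ^ m : RingAut F) = f := by
  have hdeg : f.natDegree + q.natDegree = m := by
    rw [← natDegree_skewMul hf.ne_zero hq.ne_zero, h, ← C_1, natDegree_X_pow_sub_C]
  have hm : m ≠ 0 := by
    rintro rfl
    simpa [h] using (hf.skewMul hq (θ := θ)).ne_zero
  have hf0 : f.coeff 0 ≠ 0 := by
    have h0 : f.coeff 0 * q.coeff 0 = -1 := by
      rw [← coeff_skewMul_zero, h]
      simp [Ne.symm hm]
    exact left_ne_zero_of_mul (h0 ▸ neg_ne_zero.2 one_ne_zero)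
  have hρ : skewMul θ f (skewMul θ q f - (X ^ m - 1)) =
      X ^ m * (f.map (θ ^ m : RingAut F) - f) := by
    rw [skewMul_sub, ← skewMul_assoc, h, sub_skewMul, X_pow_skewMul, skewMul_sub, skewMul_X_pow,
      one_skewMul, skewMul_one]
    ring
  have hρ0 : skewMul θ q f - (X ^ m - 1) = 0 := by
    refine eq_zero_of_degree_lt_of_coeff_skewMul_eq_zero θ hf0 (n := m) ?_ fun k hk => ?_
    · have hqf : (skewMul θ q f).natDegree = m := by
        rw [natDegree_skewMul hq.ne_zero hf.ne_zero, add_comm, hdeg]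
      have hqf0 := (hq.skewMul hf (θ := θ)).ne_zero
      calc (skewMul θ q f - (X ^ m - 1)).degree < (skewMul θ q f).degree := by
            refine degree_sub_lt_left ?_ hqf0 ?_
            · rw [degree_eq_natDegree hqf0, hqf, ← C_1, degree_X_pow_sub_C (by omega)]
            · rw [(hq.skewMul hf).leadingCoeff, leadingCoeff_X_pow_sub_one (by omega)]
        _ = m := by rw [degree_eq_natDegree hqf0, hqf]
    · rw [hρ, coeff_X_pow_mul', if_neg (by omega)]
  rw [hρ0, skewMul_zero, eq_comm, mul_eq_zero, sub_eq_zero] at hρ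
  exact hρ.resolve_left (pow_ne_zero _ X_ne_zero)

end Polynomial

theorem orderOf_dvd_of_pow_mem {G : Type*} [Monoid G] {g : G} (hg : IsOfFinOrder g) {S : Set G}
    {m : ℕ} (hm : g ^ m ∈ S) (hS : ∀ t, 0 < t → t < orderOf g → g ^ t ∉ S) : orderOf g ∣ m := by
  by_contra hdvd
  exact hS (m % orderOf g) (Nat.pos_of_ne_zero (mt Nat.dvd_of_mod_eq_zero hdvd))
    (Nat.mod_lt _ hg.orderOf_pos) (by rwa [pow_mod_orderOf])

/-- In `R = F_q[X;θ]`, suppose `f·q_f = X^m − 1` with `f, q_f` monic, and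
let `Θ` apply `θ` to coefficients. Then `f = (f)Θ^m`, i.e. all coefficients of `f` are
fixed by `θ^m`; consequently, if the coefficient vector `(f_0,...,f_{n-1})` is not fixed
by `θ^t` for any `0 < t < s` (`s` the order of `θ`), then `s ∣ m`. -/
theorem map_pow_eq_self_and_orderOf_dvd {F : Type*} [Field F] [Fintype F]
    (θ : RingAut F) (s : ℕ) (hs : orderOf θ = s)
    (f qf : Polynomial F) (hf : f.Monic) (hqf : qf.Monic) (m : ℕ)
    (hmul : ∀ k : ℕ, skewMulCoeff θ f qf k = (X ^ m - 1 : Polynomial F).coeff k) :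
    f.map ((θ ^ m : RingAut F) : F →+* F) = f ∧
      ((∀ t : ℕ, 0 < t → t < s →
          ∃ i < f.natDegree, (θ ^ t) (f.coeff i) ≠ f.coeff i) → s ∣ m) := by
  have hskew : skewMul θ f qf = X ^ m - 1 := ext fun k => (coeff_skewMul θ f qf k).trans (hmul k)
  have hfix := map_pow_eq_self_of_skewMul_eq_X_pow_sub_one θ hf hqf hskew
  refine ⟨hfix, fun hmoved => ?_⟩
  have : Finite (RingAut F) := Finite.of_injective _ DFunLike.coe_injective
  subst hs
  refine orderOf_dvd_of_pow_mem (isOfFinOrder_of_finite θ)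
    (S := {σ | ∀ i, σ (f.coeff i) = f.coeff i})
    (fun i => by simpa using congrArg (coeff · i) hfix) fun t ht hts hfixt => ?_
  obtain ⟨i, -, hi⟩ := hmoved t ht hts
  exact hi (hfixt i)
end
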